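/- arXiv:1507.04414 — 8 statements merged into one kernel-verified Lean document; each statement's English description precedes it below -/
import Mathlib

section
/- If α and β are non-zero complex numbers such that mα + nβ ≠ 0 for all positive integers m and n, then the only pair (p,q) of non-zero monic complex polynomials satisfying p(u)q(u) = p(u+β)q(u+α) is (p,q) = (1,1). -/
/-!
Compare the coefficients just below the leading one (`nextCoeff`). For monic polynomials this
coefficient is additive under multiplication, and the shift `u ↦ u + t` adds `(deg f) • t` to it.
The functional equation therefore forces `deg q • α + deg p • β = 0`, so both degrees vanish.
-/

open Polynomial

namespace Polynomial

theorem nextCoeff_taylor {R : Type*} [Semiring R] (f : R[X]) (r : R) :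
    (taylor r f).nextCoeff = f.nextCoeff + f.natDegree * f.leadingCoeff * r := by
  rcases hf : f.natDegree with _ | m
  · simp [nextCoeff, hf]
  have hdeg : (hasseDeriv m f).natDegree < 2 := by
    have := natDegree_hasseDeriv_le f m
    omega
  rw [nextCoeff_of_natDegree_pos (by simp [hf]), nextCoeff_of_natDegree_pos (by simp [hf]),
    natDegree_taylor, hf, Nat.add_sub_cancel, taylor_coeff, eval_eq_sum_range' hdeg]
  simp [Finset.sum_range_succ, hasseDeriv_coeff, leadingCoeff, hf, add_comm 1 m]

theorem Monic.natDegree_mul_add_natDegree_mul_eq_zero {R : Type*} [CommRing R] {p q : R[X]}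
    (hp : p.Monic) (hq : q.Monic) {α β : R}
    (h : p * q = p.comp (X + C β) * q.comp (X + C α)) :
    (q.natDegree : R) * α + p.natDegree * β = 0 := by
  have := congrArg nextCoeff h
  rw [hp.nextCoeff_mul hq, (hp.comp_X_add_C β).nextCoeff_mul (hq.comp_X_add_C α),
    ← taylor_apply, ← taylor_apply, nextCoeff_taylor, nextCoeff_taylor,
    hp.leadingCoeff, hq.leadingCoeff] at this
  linear_combination -this

end Polynomial

theorem eq_zero_and_eq_zero_of_natCast_mul_add_natCast_mul_eq_zero {K : Type*} [Ring K]
    [NoZeroDivisors K] [CharZero K] {α β : K} (hα : α ≠ 0) (hβ : β ≠ 0)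
    (h : ∀ m n : ℕ, 0 < m → 0 < n → (m : K) * α + (n : K) * β ≠ 0) {m n : ℕ}
    (hmn : (m : K) * α + n * β = 0) : m = 0 ∧ n = 0 := by
  rcases Nat.eq_zero_or_pos m with rfl | hm
  · simpa [hβ] using hmn
  rcases Nat.eq_zero_or_pos n with rfl | hn
  · simp_all
  exact absurd hmn (h m n hm hn)

theorem stmt0_general (α β : ℂ) (hα : α ≠ 0) (hβ : β ≠ 0)
    (h : ∀ m n : ℕ, 0 < m → 0 < n → (m : ℂ) * α + (n : ℂ) * β ≠ 0)
    (p q : Polynomial ℂ)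
    (hp : p.Monic) (hq : q.Monic)
    (heq : p * q = p.comp (X + C β) * q.comp (X + C α)) :
    p = 1 ∧ q = 1 := by
  obtain ⟨hq1, hp1⟩ := eq_zero_and_eq_zero_of_natCast_mul_add_natCast_mul_eq_zero hα hβ h
    (hp.natDegree_mul_add_natDegree_mul_eq_zero hq heq)
  exact ⟨hp.natDegree_eq_zero.mp hp1, hq.natDegree_eq_zero.mp hq1⟩

theorem stmt0 (α β : ℂ) (hα : α ≠ 0) (hβ : β ≠ 0)
    (h : ∀ m n : ℕ, 0 < m → 0 < n → (m : ℂ) * α + (n : ℂ) * β ≠ 0)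
    (p q : Polynomial ℂ) (hp0 : p ≠ 0) (hq0 : q ≠ 0)
    (hp : p.Monic) (hq : q.Monic)
    (heq : p * q = p.comp (X + C β) * q.comp (X + C α)) :
    p = 1 ∧ q = 1 :=
  stmt0_general α β hα hβ h p q hp hq heq
end

section
/- Let i = (i₁,…,i_N) be a finite sequence with entries in {1,2} containing l₁ ones and l₂ twos, let d = gcd(l₁,l₂) and s_m = l_m/d for m = 1,2. Then there exists a cyclically consecutive subsequence i' of i of length s₁ + s₂ containing exactly s₁ ones. -/
/-!
Put `L = s₁ + s₂`, so that `N = d L`. Let `W k` be the number of ones in the cyclic window of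
length `L` starting at position `k`. The `d` windows starting at `0, L, …, (d - 1) L` partition
the cycle, so their counts add up to `l₁ = d s₁`; hence one of them has at most `s₁` ones and
another at least `s₁`. Shifting a window by one place changes `W` by at most one, so by the
discrete intermediate value theorem some window has exactly `s₁` ones.
-/

open Finset

theorem exists_eq_of_succ_le_add_one {f : ℕ → ℤ} (hf : ∀ n, f (n + 1) ≤ f n + 1)
    {a b : ℕ} (hab : a ≤ b) {s : ℤ} (ha : f a ≤ s) (hb : s ≤ f b) : ∃ n, f n = s := by
  induction b, hab using Nat.le_induction with
  | base => exact ⟨a, le_antisymm ha hb⟩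
  | succ b _ ih =>
    by_cases hsb : s ≤ f b
    · exact ih hsb
    · exact ⟨b + 1, le_antisymm (by linarith [hf b]) hb⟩

theorem exists_eq_of_abs_sub_le_one {f : ℕ → ℤ} (hf : ∀ n, |f (n + 1) - f n| ≤ 1)
    {a b : ℕ} {s : ℤ} (ha : f a ≤ s) (hb : s ≤ f b) : ∃ n, f n = s := by
  rcases le_total a b with hab | hba
  · exact exists_eq_of_succ_le_add_one
      (fun n => by linarith [(abs_le.1 (hf n)).2]) hab ha hb
  · obtain ⟨n, hn⟩ := exists_eq_of_succ_le_add_one (f := -f)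
      (fun n => by simp only [Pi.neg_apply]; linarith [(abs_le.1 (hf n)).1])
      hba (neg_le_neg hb) (neg_le_neg ha)
    exact ⟨n, neg_inj.1 hn⟩

section WindowSum

variable {M : Type*} [AddCommMonoid M]

def windowSum (c : ℕ → M) (L k : ℕ) : M :=
  ∑ j ∈ range L, c (k + j)

theorem windowSum_add (c : ℕ → M) (m n k : ℕ) :
    windowSum c (m + n) k = windowSum c m k + windowSum c n (k + m) := by
  simp only [windowSum, sum_range_add, add_assoc]

theorem windowSum_mul_eq_sum (c : ℕ → M) (d L : ℕ) :
    windowSum c (d * L) 0 = ∑ i ∈ range d, windowSum c L (i * L) := by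
  induction d with
  | zero => simp [windowSum]
  | succ d ih => rw [sum_range_succ, ← ih, Nat.succ_mul, windowSum_add, zero_add]

theorem windowSum_succ_add (c : ℕ → M) (L k : ℕ) :
    windowSum c L (k + 1) + c k = windowSum c L k + c (k + L) := by
  have h := windowSum_add c 1 L k
  rw [add_comm 1 L, windowSum_add] at h
  simpa [windowSum, add_comm, add_left_comm, add_assoc] using h.symm

end WindowSum

section Cyclic

variable {α : Type*} [DecidableEq α]

def periodicIndicator (l : List α) (a : α) (n : ℕ) : ℕ :=
  if l[n % l.length]? = some a then 1 else 0

theorem List.count_eq_sum_range (w : List α) (a : α) :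
    w.count a = ∑ j ∈ Finset.range w.length, if w[j]? = some a then 1 else 0 := by
  induction w with
  | nil => simp
  | cons b t ih =>
    rw [List.count_cons, List.length_cons, Finset.sum_range_succ', ih]
    simp only [List.getElem?_cons_succ, List.getElem?_cons_zero, Option.some.injEq, beq_iff_eq]

theorem count_take_rotate_eq_windowSum (l : List α) (a : α) {L : ℕ} (hL : L ≤ l.length)
    (k : ℕ) : ((l.rotate k).take L).count a = windowSum (periodicIndicator l a) L k := by
  have hlen : ((l.rotate k).take L).length = L := by simp [hL]
  rw [List.count_eq_sum_range, hlen, windowSum]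
  refine sum_congr rfl fun j hj => ?_
  have hjL : j < L := mem_range.1 hj
  rw [List.getElem?_take_of_lt hjL, List.getElem?_rotate (by omega), periodicIndicator,
    add_comm j k]

theorem exists_count_take_rotate_eq {l : List α} {a : α} {d L s : ℕ} (hd : 0 < d)
    (hlen : l.length = d * L) (hcount : l.count a = d * s) :
    ∃ k, ((l.rotate k).take L).count a = s := by
  set c := periodicIndicator l a
  have hL : L ≤ l.length := hlen ▸ Nat.le_mul_of_pos_left L hd
  have hwindows : ∑ i ∈ range d, windowSum c L (i * L) = ∑ _i ∈ range d, s := by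
    rw [← windowSum_mul_eq_sum, ← hlen, ← count_take_rotate_eq_windowSum l a le_rfl,
      List.rotate_zero, List.take_length, hcount, sum_const, card_range, smul_eq_mul]
  have hne : (range d).Nonempty := nonempty_range_iff.2 hd.ne'
  obtain ⟨i, -, hi⟩ := exists_le_of_sum_le hne hwindows.le
  obtain ⟨j, -, hj⟩ := exists_le_of_sum_le hne hwindows.ge
  have hc : ∀ n, c n ≤ 1 := fun n => by unfold c periodicIndicator; split_ifs <;> omega
  have hstep : ∀ k, |((windowSum c L (k + 1) : ℕ) : ℤ) - (windowSum c L k : ℕ)| ≤ 1 := by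
    intro k
    have := windowSum_succ_add c L k
    have := hc k
    have := hc (k + L)
    rw [abs_le]
    constructor <;> omega
  obtain ⟨k, hk⟩ := exists_eq_of_abs_sub_le_one
    (f := fun k => ((windowSum c L k : ℕ) : ℤ)) hstep (Int.ofNat_le.2 hi) (Int.ofNat_le.2 hj)
  exact ⟨k, by rw [count_take_rotate_eq_windowSum l a hL]; exact_mod_cast hk⟩

end Cyclic

theorem stmt8 (l : List Bool) (l₁ l₂ d s₁ s₂ : ℕ)
    (h₁ : l₁ = l.count false) (h₂ : l₂ = l.count true)
    (hd : d = Nat.gcd l₁ l₂) (hs₁ : s₁ = l₁ / d) (hs₂ : s₂ = l₂ / d) :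
    ∃ k : ℕ, ((l.rotate k).take (s₁ + s₂)).length = s₁ + s₂ ∧
      ((l.rotate k).take (s₁ + s₂)).count false = s₁ := by
  rcases Nat.eq_zero_or_pos d with hd0 | hd0
  · exact ⟨0, by simp [hs₁, hs₂, hd0]⟩
  have hl₁ : l.count false = d * s₁ := by
    rw [hs₁, ← h₁, Nat.mul_div_cancel' (hd ▸ Nat.gcd_dvd_left l₁ l₂)]
  have hl₂ : l.count true = d * s₂ := by
    rw [hs₂, ← h₂, Nat.mul_div_cancel' (hd ▸ Nat.gcd_dvd_right l₁ l₂)]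
  have hlen : l.length = d * (s₁ + s₂) := by
    rw [← l.count_false_add_count_true, hl₁, hl₂, mul_add]
  obtain ⟨k, hk⟩ := exists_count_take_rotate_eq hd0 hlen hl₁
  exact ⟨k, by simp [hlen, Nat.le_mul_of_pos_left _ hd0], hk⟩
end

section
/- Let α₁, α₂ be non-zero complex numbers with mα₁ + nα₂ = 0 for relatively prime positive integers m, n, and let i ∈ M(α₁,α₂) be a non-empty sequence. Then i is cyclically irreducible if and only if its length equals m+n. -/
def wsum (α₁ α₂ : ℂ) (l : List Bool) : ℂ :=
  (l.map (fun b => if b then α₂ else α₁)).sum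

def CycRed (α₁ α₂ : ℂ) (l : List Bool) : Prop :=
  ∃ (k : ℕ) (a b : List Bool), a ≠ [] ∧ b ≠ [] ∧
    wsum α₁ α₂ a = 0 ∧ wsum α₁ α₂ b = 0 ∧ l.rotate k = a ++ b

lemma wsum_counts (α₁ α₂ : ℂ) (l : List Bool) :
    wsum α₁ α₂ l = (l.count false : ℂ) * α₁ + (l.count true : ℂ) * α₂ := by
  induction l with
  | nil => simp [wsum]
  | cons x xs ih =>
    cases x <;> simp [wsum, List.count_cons] at ih ⊢ <;> push_cast <;> ring_nf <;>
      rw [ih] <;> ring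

lemma count_split (l : List Bool) : l.count false + l.count true = l.length := by
  induction l with
  | nil => simp
  | cons x xs ih => cases x <;> simp [List.count_cons] <;> omega

lemma zero_sum_counts (α₁ α₂ : ℂ) (hα₁ : α₁ ≠ 0) (m n : ℕ) (hm : 0 < m)
    (hco : Nat.Coprime m n) (hmn : (m : ℂ) * α₁ + (n : ℂ) * α₂ = 0)
    (l : List Bool) (hM : wsum α₁ α₂ l = 0) :
    ∃ s, l.count false = s * m ∧ l.count true = s * n := by
  rw [wsum_counts] at hM
  have h3 : ((l.count false : ℂ) * n - (l.count true : ℂ) * m) * α₁ = 0 := by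
    linear_combination (n : ℂ) * hM - (l.count true : ℂ) * hmn
  rcases mul_eq_zero.mp h3 with h4 | h4
  · have h5 : l.count false * n = l.count true * m := by
      have := sub_eq_zero.mp h4
      exact_mod_cast this
    obtain ⟨s, hs⟩ : m ∣ l.count false :=
      hco.dvd_of_dvd_mul_right ⟨l.count true, by rw [h5, mul_comm]⟩
    refine ⟨s, by rw [hs, mul_comm], ?_⟩
    have h6 : s * n * m = l.count true * m := by rw [← h5, hs]; ring
    exact (Nat.eq_of_mul_eq_mul_right hm h6).symm
  · exact absurd h4 hα₁

lemma ivt_up (f : ℕ → ℕ) (hstep : ∀ r, f (r+1) ≤ f r + 1 ∧ f r ≤ f (r+1) + 1)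
    (v : ℕ) : ∀ (d a : ℕ), f a ≤ v → v ≤ f (a + d) → ∃ r, f r = v := by
  intro d
  induction d with
  | zero => intro a h1 h2; simp at h2; exact ⟨a, le_antisymm h1 h2⟩
  | succ d ih =>
    intro a h1 h2
    by_cases h : f (a+1) ≤ v
    · have : a + (d+1) = (a+1) + d := by omega
      rw [this] at h2
      exact ih (a+1) h h2
    · have := hstep a
      exact ⟨a, by omega⟩

lemma ivt_down (f : ℕ → ℕ) (hstep : ∀ r, f (r+1) ≤ f r + 1 ∧ f r ≤ f (r+1) + 1)
    (v : ℕ) : ∀ (d a : ℕ), v ≤ f a → f (a + d) ≤ v → ∃ r, f r = v := by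
  intro d
  induction d with
  | zero => intro a h1 h2; simp at h2; exact ⟨a, le_antisymm h2 h1⟩
  | succ d ih =>
    intro a h1 h2
    by_cases h : v ≤ f (a+1)
    · have : a + (d+1) = (a+1) + d := by omega
      rw [this] at h2
      exact ih (a+1) h h2
    · have := hstep a
      exact ⟨a, by omega⟩

lemma block_count (K : ℕ) : ∀ (t : ℕ) (l : List Bool), l.length = t * K →
    ∑ i ∈ Finset.range t, ((l.drop (i*K)).take K).count true = l.count true := by
  intro t
  induction t with
  | zero =>
    intro l hl
    simp at hl
    subst hl
    simp
  | succ t ih =>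
    intro l hl
    rw [Finset.sum_range_succ']
    have h1 : ((l.drop (0*K)).take K).count true = (l.take K).count true := by simp
    have h4 : ∑ i ∈ Finset.range t, ((l.drop ((i+1)*K)).take K).count true
        = (l.drop K).count true := by
      rw [← ih (l.drop K) (by rw [List.length_drop, hl, show (t+1)*K = t*K + K by ring]; omega)]
      apply Finset.sum_congr rfl
      intro i _
      congr 2
      rw [List.drop_drop]
      congr 1
      ring
    rw [h4, h1]
    conv_rhs => rw [← List.take_append_drop K l]
    rw [List.count_append]
    omega

lemma take_count_step (xs : List Bool) (K : ℕ) :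
    (xs.take (K+1)).count true ≤ (xs.take K).count true + 1 ∧
    (xs.take K).count true ≤ (xs.take (K+1)).count true := by
  rw [List.take_succ]
  rcases hx : xs[K]? with _ | b
  · simp
  · rw [List.count_append]
    cases b <;> simp

lemma g_step (l : List Bool) (K : ℕ) (hK : K < l.length) (r : ℕ) :
    ((l.rotate (r+1)).take K).count true ≤ ((l.rotate r).take K).count true + 1 ∧
    ((l.rotate r).take K).count true ≤ ((l.rotate (r+1)).take K).count true + 1 := by
  have hrot : l.rotate (r+1) = (l.rotate r).rotate 1 := by
    rw [List.rotate_rotate]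
  have hlen : (l.rotate r).length = l.length := List.length_rotate l r
  rcases K with _ | K'
  · simp
  rcases hc : l.rotate r with _ | ⟨x, xs⟩
  · rw [hc] at hlen; simp at hlen; omega
  have hxs : xs.length = l.length - 1 := by
    have := hlen; rw [hc] at this; simp at this; omega
  have h2 : (l.rotate (r+1)).take (K'+1) = xs.take (K'+1) := by
    rw [hrot, hc, List.rotate_cons_succ, List.rotate_zero,
      List.take_append_of_le_length (by omega)]
  have h3 := take_count_step xs K'
  rw [h2, List.take_succ_cons, List.count_cons]
  cases x <;> simp <;> omega

theorem stmt9 (α₁ α₂ : ℂ) (hα₁ : α₁ ≠ 0) (hα₂ : α₂ ≠ 0)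
    (m n : ℕ) (hm : 0 < m) (hn : 0 < n) (hco : Nat.Coprime m n)
    (hmn : (m : ℂ) * α₁ + (n : ℂ) * α₂ = 0)
    (l : List Bool) (hl : l ≠ []) (hM : wsum α₁ α₂ l = 0) :
    ¬ CycRed α₁ α₂ l ↔ l.length = m + n := by
  set K := m + n with hK
  set L := l.length with hL
  have hLpos : 0 < L := by rw [hL]; exact List.length_pos_iff.mpr hl
  obtain ⟨t, ht0, ht1⟩ := zero_sum_counts α₁ α₂ hα₁ m n hm hco hmn l hM
  have hLK : L = t * K := by
    have h1 := count_split l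
    rw [ht0, ht1, ← hL] at h1
    have h2 : t * m + t * n = t * K := by rw [hK]; ring
    omega
  have ht : 1 ≤ t := by
    rcases Nat.eq_zero_or_pos t with h | h
    · rw [h, zero_mul] at hLK; omega
    · exact h
  constructor
  · -- ¬CycRed → length = m + n
    intro hnc
    by_contra hne
    have ht2 : 2 ≤ t := by
      rcases (by omega : t = 1 ∨ 2 ≤ t) with h | h
      · exact absurd (by rw [hLK, h, one_mul]) hne
      · exact h
    obtain ⟨u, rfl⟩ : ∃ u, t = u + 2 := ⟨t - 2, by omega⟩
    have hKpos : 0 < K := by rw [hK]; omega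
    have hKL : K < L := by
      have h1 : (u + 2) * K = u * K + K + K := by ring
      omega
    have hbc := block_count K (u+2) l hLK
    rw [ht1] at hbc
    have hble : ∃ i < u+2, ((l.drop (i*K)).take K).count true ≤ n := by
      by_contra hcon
      push_neg at hcon
      have h1 : ∑ _i ∈ Finset.range (u+2), n
          < ∑ i ∈ Finset.range (u+2), ((l.drop (i*K)).take K).count true := by
        apply Finset.sum_lt_sum_of_nonempty ⟨0, Finset.mem_range.mpr (by omega)⟩
        intro i hi
        exact hcon i (Finset.mem_range.mp hi)
      rw [hbc, Finset.sum_const, Finset.card_range, smul_eq_mul, mul_comm] at h1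
      omega
    have hbge : ∃ i < u+2, n ≤ ((l.drop (i*K)).take K).count true := by
      by_contra hcon
      push_neg at hcon
      have h1 : ∑ i ∈ Finset.range (u+2), ((l.drop (i*K)).take K).count true
          < ∑ _i ∈ Finset.range (u+2), n := by
        apply Finset.sum_lt_sum_of_nonempty ⟨0, Finset.mem_range.mpr (by omega)⟩
        intro i hi
        exact hcon i (Finset.mem_range.mp hi)
      rw [hbc, Finset.sum_const, Finset.card_range, smul_eq_mul, mul_comm] at h1
      omega
    obtain ⟨i₁, hi₁, hle⟩ := hble
    obtain ⟨i₂, hi₂, hge⟩ := hbge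
    have hwin : ∀ i < u+2, ((l.rotate (i*K)).take K).count true
        = ((l.drop (i*K)).take K).count true := by
      intro i hi
      have h0 : i * K + K ≤ (u+2) * K := by
        have := Nat.mul_le_mul_right K hi
        calc i * K + K = (i+1) * K := by ring
        _ ≤ (u+2) * K := Nat.mul_le_mul_right K hi
      have h1 : i * K ≤ l.length := by rw [← hL]; omega
      rw [List.rotate_eq_drop_append_take h1, List.take_append_of_le_length]
      rw [List.length_drop, ← hL]
      omega
    set f : ℕ → ℕ := fun r => ((l.rotate r).take K).count true with hf
    have hstep : ∀ r, f (r+1) ≤ f r + 1 ∧ f r ≤ f (r+1) + 1 := fun r =>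
      g_step l K (by rw [← hL]; exact hKL) r
    have hr : ∃ r, f r = n := by
      rcases le_or_gt (i₁ * K) (i₂ * K) with h | h
      · apply ivt_up f hstep n (i₂ * K - i₁ * K) (i₁ * K)
        · show ((l.rotate (i₁*K)).take K).count true ≤ n
          rw [hwin i₁ hi₁]; exact hle
        · rw [show i₁ * K + (i₂ * K - i₁ * K) = i₂ * K by omega]
          show n ≤ ((l.rotate (i₂*K)).take K).count true
          rw [hwin i₂ hi₂]; exact hge
      · apply ivt_down f hstep n (i₁ * K - i₂ * K) (i₂ * K)
        · show n ≤ ((l.rotate (i₂*K)).take K).count true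
          rw [hwin i₂ hi₂]; exact hge
        · rw [show i₂ * K + (i₁ * K - i₂ * K) = i₁ * K by omega]
          show ((l.rotate (i₁*K)).take K).count true ≤ n
          rw [hwin i₁ hi₁]; exact hle
    obtain ⟨r, hrn⟩ := hr
    have hfr : ((l.rotate r).take K).count true = n := hrn
    apply hnc
    refine ⟨r, (l.rotate r).take K, (l.rotate r).drop K, ?_, ?_, ?_, ?_,
      (List.take_append_drop K (l.rotate r)).symm⟩
    · have h1 : ((l.rotate r).take K).length = K := by
        rw [List.length_take, List.length_rotate, ← hL]
        omega
      intro hcon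
      rw [hcon] at h1
      simp at h1
      omega
    · have h1 : ((l.rotate r).drop K).length = L - K := by
        rw [List.length_drop, List.length_rotate, hL]
      intro hcon
      rw [hcon] at h1
      simp at h1
      omega
    · have hlen1 : ((l.rotate r).take K).length = K := by
        rw [List.length_take, List.length_rotate, ← hL]; omega
      have hcf : ((l.rotate r).take K).count false = m := by
        have := count_split ((l.rotate r).take K)
        rw [hfr, hlen1] at this
        omega
      rw [wsum_counts, hfr, hcf]
      exact hmn
    · have hperm := (List.rotate_perm l r).count_eq
      have hctr : (l.rotate r).count true = (u+2) * n := by rw [hperm]; exact ht1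
      have hsplit : ((l.rotate r).take K).count true
          + ((l.rotate r).drop K).count true = (u+2) * n := by
        rw [← List.count_append, List.take_append_drop]
        exact hctr
      have hct : ((l.rotate r).drop K).count true = (u+1) * n := by
        have h1 : (u+2) * n = n + (u+1) * n := by ring
        omega
      have hlen2 : ((l.rotate r).drop K).length = (u+1) * K := by
        rw [List.length_drop, List.length_rotate, ← hL, hLK]
        have h1 : (u+2) * K = (u+1) * K + K := by ring
        omega
      have hcf : ((l.rotate r).drop K).count false = (u+1) * m := by
        have h2 := count_split ((l.rotate r).drop K)
        rw [hct, hlen2] at h2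
        have h3 : (u+1) * K = (u+1)*m + (u+1)*n := by rw [hK]; ring
        omega
      rw [wsum_counts, hct, hcf]
      push_cast
      linear_combination ((u : ℂ) + 1) * hmn
  · -- length = m + n → ¬CycRed
    intro hlen ⟨k, a, b, ha, hb, hwa, hwb, heq⟩
    obtain ⟨s₁, hs₁f, hs₁t⟩ := zero_sum_counts α₁ α₂ hα₁ m n hm hco hmn a hwa
    obtain ⟨s₂, hs₂f, hs₂t⟩ := zero_sum_counts α₁ α₂ hα₁ m n hm hco hmn b hwb
    have hla : a.length = s₁ * K := by
      have h1 := count_split a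
      rw [hs₁f, hs₁t] at h1
      have h2 : s₁ * K = s₁ * m + s₁ * n := by rw [hK]; ring
      omega
    have hlb : b.length = s₂ * K := by
      have h1 := count_split b
      rw [hs₂f, hs₂t] at h1
      have h2 : s₂ * K = s₂ * m + s₂ * n := by rw [hK]; ring
      omega
    have h1 : 1 ≤ s₁ := by
      rcases Nat.eq_zero_or_pos s₁ with h | h
      · subst h; simp at hla; exact absurd hla ha
      · exact h
    have h2 : 1 ≤ s₂ := by
      rcases Nat.eq_zero_or_pos s₂ with h | h
      · subst h; simp at hlb; exact absurd hlb hb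
      · exact h
    have hll : L = a.length + b.length := by
      rw [hL, ← List.length_rotate l k, heq, List.length_append]
    have hLeqK : L = K := by rw [hL, hK]; exact hlen
    have hs : s₁ * K + s₂ * K = (s₁ + s₂) * K := by ring
    have h3 : 2 * K ≤ (s₁ + s₂) * K := Nat.mul_le_mul_right K (by omega)
    have hKpos : 0 < K := by rw [hK]; omega
    omega
end

section
/- Let α₁, α₂ be non-zero complex numbers with mα₁ + nα₂ = 0 for relatively prime positive integers m, n. The number of ℤ-orbits (under cyclic shift) of cyclically irreducible sequences in M(α₁,α₂) is (1/(m+n)) · C(m+n, m). -/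
def CycIrrSet (α₁ α₂ : ℂ) : Type :=
  {l : List Bool // l ≠ [] ∧ wsum α₁ α₂ l = 0 ∧ ¬ CycRed α₁ α₂ l}

def shiftRel (α₁ α₂ : ℂ) (x y : CycIrrSet α₁ α₂) : Prop :=
  ∃ k : ℕ, x.1.rotate k = y.1

/-!
Write `1` as `false` and `2` as `true`. As `mα₁ + nα₂ = 0` with `m, n` coprime, a word has weight
zero iff it has `tm` ones and `tn` twos for some `t`. If `t ≥ 2`, some cyclic window of length
`m + n` holds exactly `m` ones (a shift raises the count by at most one, and the `t` blocks of the
word average `m` ones), and cutting there splits a rotation of the word. So the cyclically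
irreducible words are the `C(m+n, m)` arrangements of `m` ones and `n` twos. A word fixed by a
rotation is a power of its prefix of length the minimal period, and the exponent divides both `m`
and `n`; hence every orbit has exactly `m + n` elements.
-/

open List Function

theorem Nat.exists_eq_of_le_of_le_of_succ_le (f : ℕ → ℕ) (hf : ∀ j, f (j + 1) ≤ f j + 1)
    {a b c : ℕ} (hab : a ≤ b) (ha : f a ≤ c) (hb : c ≤ f b) : ∃ j, f j = c := by
  induction b, hab using Nat.le_induction with
  | base => exact ⟨a, le_antisymm ha hb⟩
  | succ b _ ih =>
    by_cases hc : c ≤ f b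
    · exact ih hc
    · exact ⟨b + 1, by have := hf b; omega⟩

namespace List

section

variable {α : Type*}

theorem iterate_rotate_one (l : List α) (k : ℕ) : (rotate · 1)^[k] l = l.rotate k := by
  induction k with
  | zero => simp
  | succ k ih => rw [iterate_succ_apply', ih, rotate_rotate]

theorem isPeriodicPt_rotate_one_iff {l : List α} {k : ℕ} :
    IsPeriodicPt (rotate · 1) k l ↔ l.rotate k = l := by
  rw [IsPeriodicPt, IsFixedPt, iterate_rotate_one]

variable [BEq α] (a : α)

theorem count_take_add {l : List α} {i j : ℕ} (h : i + j ≤ l.length) :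
    (l.take (i + j)).count a = (l.take i).count a + ((l.rotate i).take j).count a := by
  rw [take_add, count_append, rotate_eq_drop_append_take (by omega),
    take_append_of_le_length (by simp; omega)]

theorem count_take_mul_eq_sum {l : List α} {k N : ℕ} (h : k * N ≤ l.length) :
    (l.take (k * N)).count a = ∑ i ∈ Finset.range k, ((l.rotate (i * N)).take N).count a := by
  induction k with
  | zero => simp
  | succ k ih =>
    rw [Finset.sum_range_succ, ← ih (by nlinarith), add_mul, one_mul, count_take_add _ (by lia)]

theorem count_take_rotate_succ_le {l : List α} {N : ℕ} (h : N ≤ l.length) (j : ℕ) :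
    ((l.rotate (j + 1)).take N).count a ≤ ((l.rotate j).take N).count a + 1 := by
  rw [← rotate_rotate]
  have h' : N ≤ (l.rotate j).length := by rwa [length_rotate]
  generalize l.rotate j = u at h'
  match u, N with
  | [], _ => simp
  | _ :: _, 0 => simp
  | x :: r, N + 1 =>
    simp only [length_cons] at h'
    rw [rotate_cons_succ, rotate_zero, take_add_one, take_append_of_le_length (by omega),
      take_succ_cons, count_append, count_cons]
    have : ((r ++ [x])[N]?.toList).count a ≤ 1 :=
      count_le_length.trans (by cases (r ++ [x])[N]? <;> simp)
    omega

theorem count_eq_mul_of_rotate_eq_self {l : List α} {g : ℕ} (hg : g ∣ l.length)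
    (h : l.rotate g = l) : l.count a = l.length / g * (l.take g).count a := by
  obtain ⟨k, hk⟩ := hg
  rcases Nat.eq_zero_or_pos g with rfl | hg
  · simp_all
  have hper : ∀ i, l.rotate (i * g) = l := fun i =>
    isPeriodicPt_rotate_one_iff.mp ((isPeriodicPt_rotate_one_iff.mpr h).const_mul i)
  have := count_take_mul_eq_sum a (l := l) (k := k) (N := g) (by rw [hk, mul_comm])
  simp only [hper, Finset.sum_const, Finset.card_range, smul_eq_mul] at this
  rw [hk, Nat.mul_div_cancel_left _ hg, ← this, mul_comm, ← hk, take_length]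

theorem exists_count_take_rotate_eq {l : List α} {t N c : ℕ} (ht : 0 < t)
    (hl : l.length = t * N) (hc : l.count a = t * c) :
    ∃ j, ((l.rotate j).take N).count a = c := by
  set W : ℕ → ℕ := fun j => ((l.rotate j).take N).count a
  have hsum : ∑ i ∈ Finset.range t, W (i * N) = ∑ _i ∈ Finset.range t, c := by
    rw [← count_take_mul_eq_sum a hl.ge, ← hl, take_length, hc]
    simp
  have hne : (Finset.range t).Nonempty := Finset.nonempty_range_iff.mpr ht.ne'
  obtain ⟨i₀, hi₀, hle⟩ := Finset.exists_le_of_sum_le hne hsum.le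
  obtain ⟨i₁, -, hge⟩ := Finset.exists_le_of_sum_le hne hsum.ge
  have hperiodic : W (i₁ * N + l.length) = W (i₁ * N) := by
    simp only [W, ← rotate_rotate, ← length_rotate l (i₁ * N), rotate_length]
  refine Nat.exists_eq_of_le_of_le_of_succ_le W
    (count_take_rotate_succ_le a (by rw [hl]; exact Nat.le_mul_of_pos_left N ht))
    (a := i₀ * N) (b := i₁ * N + l.length) ?_ hle (hperiodic ▸ hge)
  have : i₀ * N ≤ t * N := Nat.mul_le_mul_right N (Finset.mem_range.mp hi₀).le
  omega

end

theorem length_eq_mul_of_count {l : List Bool} {t m n : ℕ} (h₀ : l.count false = t * m)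
    (h₁ : l.count true = t * n) : l.length = t * (m + n) := by
  rw [← count_false_add_count_true, h₀, h₁, mul_add]

theorem minimalPeriod_rotate_one_eq_length {l : List Bool}
    (hco : (l.count false).Coprime (l.count true)) :
    minimalPeriod (rotate · 1) l = l.length := by
  have hL : 0 < l.length := by
    rw [← count_false_add_count_true]
    by_contra h
    simp_all
  have hperL : IsPeriodicPt (rotate · 1) l.length l :=
    isPeriodicPt_rotate_one_iff.mpr l.rotate_length
  have hdvd : minimalPeriod (rotate · 1) l ∣ l.length := hperL.minimalPeriod_dvd
  have hrot := isPeriodicPt_rotate_one_iff.mp (isPeriodicPt_minimalPeriod (rotate · 1) l)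
  refine Nat.eq_of_dvd_of_div_eq_one hdvd (Nat.eq_one_of_dvd_coprimes hco ?_ ?_)
  · exact ⟨_, count_eq_mul_of_rotate_eq_self false hdvd hrot⟩
  · exact ⟨_, count_eq_mul_of_rotate_eq_self true hdvd hrot⟩

theorem card_count_false_count_true_eq_choose (m n : ℕ) :
    Nat.card {l : List Bool // l.count false = m ∧ l.count true = n} = (m + n).choose m := by
  let toVector : {l : List Bool // l.count false = m ∧ l.count true = n} ≃
      {v : List.Vector Bool (m + n) // v.toList.count true = n} :=
    { toFun l := ⟨⟨l.1, by rw [← count_false_add_count_true, l.2.1, l.2.2]⟩, l.2.2⟩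
      invFun v := ⟨v.1.1, by
        have hlen : v.1.1.length = m + n := v.1.2
        have htrue : v.1.1.count true = n := v.2
        rw [← count_false_add_count_true, htrue] at hlen
        omega, v.2⟩
      left_inv _ := rfl
      right_inv _ := rfl }
  let trueSet : List.Vector Bool (m + n) ≃ Finset (Fin (m + n)) :=
    { toFun v := {i | v.get i = true}
      invFun s := List.Vector.ofFn (fun i => decide (i ∈ s))
      left_inv v := by ext i; simp
      right_inv s := by ext i; simp }
  have hcard (v : List.Vector Bool (m + n)) : v.toList.count true = n ↔ (trueSet v).card = n := by
    simp [trueSet, Fin.card_filter_univ_eq_vector_get_eq_count]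
  rw [Nat.card_congr (toVector.trans (trueSet.subtypeEquiv (q := fun s => s.card = n) hcard)),
    Nat.card_eq_fintype_card, Fintype.card_finset_len, Fintype.card_fin, Nat.choose_symm_add]

end List

theorem Nat.card_eq_card_quot_mul {α β : Type*} (r : α → α → Prop)
    (e : ∀ q : Quot r, {x // Quot.mk r x = q} ≃ β) :
    Nat.card α = Nat.card (Quot r) * Nat.card β := by
  rw [← Nat.card_prod]
  exact Nat.card_congr ((Equiv.sigmaFiberEquiv (Quot.mk r)).symm.trans
    (Equiv.sigmaEquivProdOfEquiv e))

theorem Nat.Coprime.exists_eq_mul_of_mul_eq_mul {m n c₀ c₁ : ℕ} (hco : m.Coprime n) (hn : 0 < n)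
    (h : n * c₀ = m * c₁) : ∃ t, c₀ = t * m ∧ c₁ = t * n := by
  obtain ⟨t, rfl⟩ : n ∣ c₁ := hco.symm.dvd_of_dvd_mul_left ⟨c₀, h.symm⟩
  exact ⟨t, Nat.eq_of_mul_eq_mul_left hn (by rw [h]; ring), mul_comm n t⟩

section Weights

variable {α₁ α₂ : ℂ}

theorem wsum_eq_count (l : List Bool) :
    wsum α₁ α₂ l = l.count false * α₁ + l.count true * α₂ := by
  induction l with
  | nil => simp [wsum]
  | cons b l ih =>
    rw [wsum] at ih ⊢
    cases b <;> simp only [map_cons, sum_cons, ih, count_cons_self, count_cons_of_ne, ne_eq,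
      Bool.false_eq_true, Bool.true_eq_false, not_false_eq_true, ↓reduceIte, Nat.cast_add,
      Nat.cast_one] <;> ring

theorem wsum_append (a b : List Bool) : wsum α₁ α₂ (a ++ b) = wsum α₁ α₂ a + wsum α₁ α₂ b := by
  simp [wsum]

theorem wsum_rotate (l : List Bool) (k : ℕ) : wsum α₁ α₂ (l.rotate k) = wsum α₁ α₂ l :=
  ((l.rotate_perm k).map _).sum_eq

theorem CycRed.of_rotate {l : List Bool} {k : ℕ} (h : CycRed α₁ α₂ (l.rotate k)) :
    CycRed α₁ α₂ l := by
  obtain ⟨j, a, b, ha, hb, hwa, hwb, hab⟩ := h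
  exact ⟨k + j, a, b, ha, hb, hwa, hwb, by rw [← rotate_rotate, hab]⟩

variable {m n : ℕ}

theorem wsum_eq_zero_iff (hα₁ : α₁ ≠ 0) (hn : 0 < n) (hco : m.Coprime n)
    (hmn : (m : ℂ) * α₁ + (n : ℂ) * α₂ = 0) {l : List Bool} :
    wsum α₁ α₂ l = 0 ↔ ∃ t, l.count false = t * m ∧ l.count true = t * n := by
  rw [wsum_eq_count]
  constructor
  · intro h
    apply hco.exists_eq_mul_of_mul_eq_mul hn
    have : ((n : ℂ) * l.count false - m * l.count true) * α₁ = 0 := by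
      linear_combination (n : ℂ) * h - (l.count true : ℂ) * hmn
    exact_mod_cast sub_eq_zero.mp ((mul_eq_zero.mp this).resolve_right hα₁)
  · rintro ⟨t, h₀, h₁⟩
    rw [h₀, h₁]
    push_cast
    linear_combination (t : ℂ) * hmn

theorem add_le_length_of_wsum_eq_zero (hα₁ : α₁ ≠ 0) (hn : 0 < n) (hco : m.Coprime n)
    (hmn : (m : ℂ) * α₁ + (n : ℂ) * α₂ = 0) {l : List Bool} (hne : l ≠ [])
    (hw : wsum α₁ α₂ l = 0) : m + n ≤ l.length := by
  obtain ⟨t, h₀, h₁⟩ := (wsum_eq_zero_iff hα₁ hn hco hmn).mp hw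
  have hlen := length_eq_mul_of_count h₀ h₁
  have ht : t ≠ 0 := by rintro rfl; simp_all
  rw [hlen]
  exact Nat.le_mul_of_pos_left _ (Nat.pos_of_ne_zero ht)

theorem not_cycRed_of_count (hα₁ : α₁ ≠ 0) (hn : 0 < n) (hco : m.Coprime n)
    (hmn : (m : ℂ) * α₁ + (n : ℂ) * α₂ = 0) {l : List Bool} (h₀ : l.count false = m)
    (h₁ : l.count true = n) : ¬ CycRed α₁ α₂ l := by
  rintro ⟨k, a, b, ha, hb, hwa, hwb, hab⟩
  have hlen := congrArg length hab
  rw [length_rotate, length_append, ← count_false_add_count_true, h₀, h₁] at hlen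
  have := add_le_length_of_wsum_eq_zero hα₁ hn hco hmn ha hwa
  have := add_le_length_of_wsum_eq_zero hα₁ hn hco hmn hb hwb
  omega

theorem cycRed_of_count_mul (hα₁ : α₁ ≠ 0) (hn : 0 < n) (hco : m.Coprime n)
    (hmn : (m : ℂ) * α₁ + (n : ℂ) * α₂ = 0) {l : List Bool} {t : ℕ} (ht : 2 ≤ t)
    (h₀ : l.count false = t * m) (h₁ : l.count true = t * n) : CycRed α₁ α₂ l := by
  have hlen := length_eq_mul_of_count h₀ h₁
  obtain ⟨j, hj⟩ := exists_count_take_rotate_eq false (by omega) hlen h₀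
  set a := (l.rotate j).take (m + n)
  set b := (l.rotate j).drop (m + n)
  have hrot : l.rotate j = a ++ b := (take_append_drop _ _).symm
  have hlen_ab : a.length = m + n ∧ m + n < l.length := by
    have : m + n < t * (m + n) := by nlinarith
    simp only [a, length_take, length_rotate, hlen]
    omega
  have hwl : wsum α₁ α₂ (l.rotate j) = 0 := by
    rw [wsum_rotate]; exact (wsum_eq_zero_iff hα₁ hn hco hmn).mpr ⟨t, h₀, h₁⟩
  have hwa : wsum α₁ α₂ a = 0 := by
    refine (wsum_eq_zero_iff hα₁ hn hco hmn).mpr ⟨1, by rw [hj, one_mul], ?_⟩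
    have := count_false_add_count_true a
    omega
  rw [hrot, wsum_append, hwa, zero_add] at hwl
  refine ⟨j, a, b, ?_, ?_, hwa, hwl, hrot⟩
  · rw [← length_pos_iff]; omega
  · rw [← length_pos_iff, length_drop, length_rotate]; omega

theorem cycIrr_iff (hα₁ : α₁ ≠ 0) (hn : 0 < n) (hco : m.Coprime n)
    (hmn : (m : ℂ) * α₁ + (n : ℂ) * α₂ = 0) {l : List Bool} :
    (l ≠ [] ∧ wsum α₁ α₂ l = 0 ∧ ¬ CycRed α₁ α₂ l) ↔ l.count false = m ∧ l.count true = n := by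
  constructor
  · rintro ⟨hne, hw, hirr⟩
    obtain ⟨t, h₀, h₁⟩ := (wsum_eq_zero_iff hα₁ hn hco hmn).mp hw
    obtain rfl : t = 1 := by
      have := length_eq_mul_of_count h₀ h₁
      have : t ≠ 0 := by rintro rfl; simp_all
      by_contra h
      exact hirr (cycRed_of_count_mul hα₁ hn hco hmn (by omega) h₀ h₁)
    rw [h₀, h₁, one_mul, one_mul]
    exact ⟨rfl, rfl⟩
  · rintro ⟨h₀, h₁⟩
    refine ⟨?_, (wsum_eq_zero_iff hα₁ hn hco hmn).mpr ⟨1, by rw [h₀, one_mul], by rw [h₁, one_mul]⟩,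
      not_cycRed_of_count hα₁ hn hco hmn h₀ h₁⟩
    rintro rfl
    exact hn.ne (by simpa using h₁)

end Weights

section Orbits

variable {α₁ α₂ : ℂ}

def CycIrrSet.rotate (x : CycIrrSet α₁ α₂) (k : ℕ) : CycIrrSet α₁ α₂ :=
  ⟨x.1.rotate k, by rw [Ne, rotate_eq_nil_iff]; exact x.2.1, by rw [wsum_rotate]; exact x.2.2.1,
    fun h => x.2.2.2 h.of_rotate⟩

theorem shiftRel_equivalence : Equivalence (shiftRel α₁ α₂) :=
  ⟨fun x => IsRotated.refl x.1, IsRotated.symm, IsRotated.trans⟩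

noncomputable def rotateOut (q : Quot (shiftRel α₁ α₂)) (k : ℕ) :
    {x // Quot.mk (shiftRel α₁ α₂) x = q} :=
  ⟨q.out.rotate k, (Quot.sound ⟨k, rfl⟩).symm.trans q.out_eq⟩

theorem rotateOut_bijective {m n : ℕ} (hα₁ : α₁ ≠ 0) (hn : 0 < n) (hco : m.Coprime n)
    (hmn : (m : ℂ) * α₁ + (n : ℂ) * α₂ = 0) (q : Quot (shiftRel α₁ α₂)) :
    Bijective fun k : Fin (m + n) => rotateOut q k := by
  obtain ⟨h₀, h₁⟩ := (cycIrr_iff hα₁ hn hco hmn).mp q.out.2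
  have hlen : q.out.1.length = m + n := by
    rw [← count_false_add_count_true, h₀, h₁]
  have hper : minimalPeriod (rotate · 1) q.out.1 = m + n := by
    rw [minimalPeriod_rotate_one_eq_length (by rwa [h₀, h₁]), hlen]
  constructor
  · intro i j hij
    have : q.out.1.rotate i = q.out.1.rotate j := congrArg (fun y => y.1.1) hij
    refine Fin.ext (iterate_injOn_Iio_minimalPeriod (by rw [Set.mem_Iio, hper]; exact i.2)
      (by rw [Set.mem_Iio, hper]; exact j.2) ?_)
    simpa only [iterate_rotate_one] using this
  · rintro ⟨y, rfl⟩
    obtain ⟨k, hk⟩ : shiftRel α₁ α₂ (Quot.mk _ y).out y :=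
      shiftRel_equivalence.eqvGen_iff.mp (Quot.eq.mp (Quot.out_eq _))
    refine ⟨⟨k % (m + n), Nat.mod_lt _ (by omega)⟩, Subtype.ext (Subtype.ext ?_)⟩
    show (Quot.mk _ y).out.1.rotate (k % (m + n)) = y.1
    rw [← hlen, rotate_mod, hk]

end Orbits

theorem stmt10_general (α₁ α₂ : ℂ) (hα₁ : α₁ ≠ 0)
    (m n : ℕ) (hn : 0 < n) (hco : Nat.Coprime m n)
    (hmn : (m : ℂ) * α₁ + (n : ℂ) * α₂ = 0) :
    Nat.card (Quot (shiftRel α₁ α₂)) * (m + n) = Nat.choose (m + n) m := by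
  have hcard : Nat.card (CycIrrSet α₁ α₂) = (m + n).choose m := by
    rw [← card_count_false_count_true_eq_choose]
    exact Nat.card_congr (Equiv.subtypeEquivRight fun _ => cycIrr_iff hα₁ hn hco hmn)
  rw [← hcard, Nat.card_eq_card_quot_mul _
    fun q => (Equiv.ofBijective _ (rotateOut_bijective hα₁ hn hco hmn q)).symm, Nat.card_fin]

theorem stmt10 (α₁ α₂ : ℂ) (hα₁ : α₁ ≠ 0) (hα₂ : α₂ ≠ 0)
    (m n : ℕ) (hm : 0 < m) (hn : 0 < n) (hco : Nat.Coprime m n)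
    (hmn : (m : ℂ) * α₁ + (n : ℂ) * α₂ = 0) :
    Nat.card (Quot (shiftRel α₁ α₂)) * (m + n) = Nat.choose (m + n) m :=
  stmt10_general α₁ α₂ hα₁ m n hn hco hmn
end

section
/- For any sequence i = (i₁,…,i_N) ∈ M(α₁,α₂), the pair of polynomials P^i = (P₁^i, P₂^i), where P_m^i(u) = ∏_{k=1}^N (u - η_k)^{1-δ_{i_k,m}} and η_k = α_{i₁} + ⋯ + α_{i_k}, satisfies P₁^i(u)P₂^i(u) = P₁^i(u+α₂)P₂^i(u+α₁). -/
open Polynomial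

noncomputable def Pfun (α₁ α₂ : ℂ) (mb : Bool) (l : List Bool) : Polynomial ℂ :=
  ∏ k ∈ Finset.range l.length,
    if l.getD k false = mb then 1
    else (Polynomial.X - Polynomial.C (wsum α₁ α₂ (l.take (k + 1))))

/-!
Write `ηₖ = wsum α₁ α₂ (l.take k)`, so that `η₀ = η_N = 0`. Every factor `X - η_{k+1}` occurs in
exactly one of `P₁, P₂`, so `P₁ P₂ = ∏ₖ (X - η_{k+1})`. The shift by `α₂` (resp. `α₁`) acts on the
factors of `P₁` (resp. `P₂`), which are those with `iₖ = 2` (resp. `iₖ = 1`), where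
`η_{k+1} = ηₖ + α₂` (resp. `+ α₁`); hence the right-hand side is `∏ₖ (X - ηₖ)`. The two products
agree because `η₀ = η_N`.
-/

theorem Finset.prod_range_succ_eq_prod_range_of_eq {M : Type*} [CommMonoid M] (f : ℕ → M) {n : ℕ}
    (h : f n = f 0) : ∏ k ∈ Finset.range n, f (k + 1) = ∏ k ∈ Finset.range n, f k := by
  cases n with
  | zero => simp
  | succ m => rw [Finset.prod_range_succ, h, ← Finset.prod_range_succ']

lemma wsum_take_succ (α₁ α₂ : ℂ) (l : List Bool) {k : ℕ} (hk : k < l.length) :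
    wsum α₁ α₂ (l.take (k + 1)) =
      wsum α₁ α₂ (l.take k) + (if l.getD k false then α₂ else α₁) := by
  simp only [wsum, List.take_add_one, List.map_append, List.sum_append,
    List.getElem?_eq_getElem hk, List.getD_eq_getElem l false hk, Option.toList_some,
    List.map_cons, List.map_nil, List.sum_cons, List.sum_nil, add_zero]

lemma Pfun_false_mul_Pfun_true (α₁ α₂ : ℂ) (l : List Bool) :
    Pfun α₁ α₂ false l * Pfun α₁ α₂ true l =
      ∏ k ∈ Finset.range l.length, (X - C (wsum α₁ α₂ (l.take (k + 1)))) := by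
  rw [Pfun, Pfun, ← Finset.prod_mul_distrib]
  refine Finset.prod_congr rfl fun k _ => ?_
  cases l.getD k false <;> simp

lemma Pfun_false_comp_mul_Pfun_true_comp (α₁ α₂ : ℂ) (l : List Bool) :
    (Pfun α₁ α₂ false l).comp (X + C α₂) * (Pfun α₁ α₂ true l).comp (X + C α₁) =
      ∏ k ∈ Finset.range l.length, (X - C (wsum α₁ α₂ (l.take k))) := by
  rw [Pfun, Pfun, prod_comp, prod_comp, ← Finset.prod_mul_distrib]
  refine Finset.prod_congr rfl fun k hk => ?_
  rw [wsum_take_succ α₁ α₂ l (Finset.mem_range.mp hk)]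
  cases l.getD k false <;> simp [C_add]

theorem stmt12_general (α₁ α₂ : ℂ)
    (l : List Bool) (hM : wsum α₁ α₂ l = 0) :
    Pfun α₁ α₂ false l * Pfun α₁ α₂ true l =
      (Pfun α₁ α₂ false l).comp (X + C α₂) * (Pfun α₁ α₂ true l).comp (X + C α₁) := by
  rw [Pfun_false_mul_Pfun_true, Pfun_false_comp_mul_Pfun_true_comp]
  refine Finset.prod_range_succ_eq_prod_range_of_eq (fun k => X - C (wsum α₁ α₂ (l.take k))) ?_
  rw [List.take_length, hM, List.take_zero]; rfl

theorem stmt12 (α₁ α₂ : ℂ) (hα₁ : α₁ ≠ 0) (hα₂ : α₂ ≠ 0)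
    (l : List Bool) (hM : wsum α₁ α₂ l = 0) :
    Pfun α₁ α₂ false l * Pfun α₁ α₂ true l =
      (Pfun α₁ α₂ false l).comp (X + C α₂) * (Pfun α₁ α₂ true l).comp (X + C α₁) :=
  stmt12_general α₁ α₂ l hM
end

section
/- Any non-trivial solution (q₁,q₂) ∈ S(α₁,α₂) is divisible in ℂ[u] × ℂ[u] by a shifted fundamental solution P^i(u-λ) for some non-empty sequence i ∈ M(α₁,α₂) and some λ ∈ ℂ. -/
open Polynomial

open Classical in
noncomputable def nxt (q₁ : Polynomial ℂ) (α₁ α₂ : ℂ) (c : ℂ) : ℂ :=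
  if q₁.IsRoot (c + α₂) then c + α₂ else c + α₁

noncomputable def seqF (q₁ : Polynomial ℂ) (α₁ α₂ c₀ : ℂ) : ℕ → ℂ
  | 0 => c₀
  | n + 1 => nxt q₁ α₁ α₂ (seqF q₁ α₁ α₂ c₀ n)

open Classical in
noncomputable def tagF (q₁ : Polynomial ℂ) (α₁ α₂ c₀ : ℂ) (n : ℕ) : Bool :=
  decide (q₁.IsRoot (seqF q₁ α₁ α₂ c₀ n + α₂))

lemma seqF_succ (q₁ : Polynomial ℂ) (α₁ α₂ c₀ : ℂ) (n : ℕ) :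
    seqF q₁ α₁ α₂ c₀ (n + 1) =
      seqF q₁ α₁ α₂ c₀ n + (if tagF q₁ α₁ α₂ c₀ n then α₂ else α₁) := by
  classical
  by_cases h : q₁.IsRoot (seqF q₁ α₁ α₂ c₀ n + α₂) <;>
    simp [seqF, nxt, tagF, h] <;> split <;> rename_i h' <;> simp_all [IsRoot]

theorem stmt17 (α₁ α₂ : ℂ) (hα₁ : α₁ ≠ 0) (hα₂ : α₂ ≠ 0)
    (q₁ q₂ : Polynomial ℂ) (h₁0 : q₁ ≠ 0) (h₂0 : q₂ ≠ 0)
    (h₁ : q₁.Monic) (h₂ : q₂.Monic)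
    (heq : q₁ * q₂ = q₁.comp (X + C α₂) * q₂.comp (X + C α₁))
    (hnt : ¬ (q₁ = 1 ∧ q₂ = 1)) :
    ∃ (l : List Bool) (lam : ℂ), l ≠ [] ∧ wsum α₁ α₂ l = 0 ∧
      (Pfun α₁ α₂ false l).comp (X - C lam) ∣ q₁ ∧
      (Pfun α₁ α₂ true l).comp (X - C lam) ∣ q₂ := by
  classical
  -- an initial root
  obtain ⟨c₀, hc₀⟩ : ∃ c, q₁.IsRoot c ∨ q₂.IsRoot c := by
    rcases eq_or_ne q₁ 1 with h | h
    · have h2 : q₂ ≠ 1 := fun h2 => hnt ⟨h, h2⟩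
      obtain ⟨c, hc⟩ := IsAlgClosed.exists_root q₂
        (fun hd => h2 (h₂.degree_le_zero_iff_eq_one.mp hd.le))
      exact ⟨c, Or.inr hc⟩
    · obtain ⟨c, hc⟩ := IsAlgClosed.exists_root q₁
        (fun hd => h (h₁.degree_le_zero_iff_eq_one.mp hd.le))
      exact ⟨c, Or.inl hc⟩
  set seq := seqF q₁ α₁ α₂ c₀ with hseq
  set tag := tagF q₁ α₁ α₂ c₀ with htag
  have hss : ∀ n, seq (n + 1) = seq n + (if tag n then α₂ else α₁) := by
    intro n
    rw [hseq, htag]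
    exact seqF_succ q₁ α₁ α₂ c₀ n
  -- the step lemma
  have hstep : ∀ c : ℂ, (q₁.IsRoot c ∨ q₂.IsRoot c) →
      (q₁.IsRoot (c + α₂) ∨ q₂.IsRoot (c + α₁)) := by
    intro c hc
    have := congrArg (Polynomial.eval c) heq
    simp only [eval_mul, eval_comp, eval_add, eval_X, eval_C] at this
    have h0 : q₁.eval c * q₂.eval c = 0 := by
      rcases hc with h | h
      · rw [h]; ring
      · rw [h]; ring
    rw [h0] at this
    rcases mul_eq_zero.mp this.symm with h | h
    · exact Or.inl h
    · exact Or.inr h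
  -- invariant
  have hinv : ∀ n, q₁.IsRoot (seq n) ∨ q₂.IsRoot (seq n) := by
    intro n
    induction n with
    | zero => exact hc₀
    | succ n ih =>
      rcases hstep _ ih with h | h
      · have ht : tag n = true := by simpa [htag, tagF] using h
        rw [hss, ht]
        exact Or.inl (by simpa using h)
      · by_cases ht : tag n = true
        · have hr : q₁.IsRoot (seq n + α₂) := by
            have := ht; simp only [htag, tagF, decide_eq_true_eq] at this
            exact this
          rw [hss, ht]
          exact Or.inl (by simpa using hr)
        · rw [hss, if_neg ht]
          exact Or.inr (by simpa using h)
  have htagroot : ∀ n, if tag n then q₁.IsRoot (seq (n + 1))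
      else q₂.IsRoot (seq (n + 1)) := by
    intro n
    by_cases ht : tag n = true
    · have hr : q₁.IsRoot (seq n + α₂) := by
        have := ht; simp only [htag, tagF, decide_eq_true_eq] at this
        exact this
      rw [ht, if_pos rfl, hss, ht, if_pos rfl]
      simpa using hr
    · have hnr : ¬ q₁.IsRoot (seq n + α₂) := by
        intro hr
        exact ht (by simpa [htag, tagF] using hr)
      rcases hstep _ (hinv n) with h | h
      · exact absurd h hnr
      · rw [if_neg ht, hss, if_neg ht]
        simpa using h
  -- all seq values are roots of q₁ * q₂
  have hfin : Set.Finite {x : ℂ | (q₁ * q₂).IsRoot x} :=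
    Polynomial.finite_setOf_isRoot (mul_ne_zero h₁0 h₂0)
  have hmem : ∀ n, seq n ∈ {x : ℂ | (q₁ * q₂).IsRoot x} := by
    intro n
    simp only [Set.mem_setOf_eq, IsRoot, eval_mul, mul_eq_zero]
    exact hinv n
  -- pigeonhole
  have hrep : ∃ k, ∃ j < k, seq j = seq k := by
    haveI := hfin.to_subtype
    obtain ⟨a, b, hab, he⟩ := Finite.exists_ne_map_eq_of_infinite
      (fun n : ℕ => (⟨seq n, hmem n⟩ : {x : ℂ | (q₁ * q₂).IsRoot x}))
    have he' : seq a = seq b := congrArg Subtype.val he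
    rcases lt_or_gt_of_ne hab with h | h
    · exact ⟨b, a, h, he'⟩
    · exact ⟨a, b, h, he'.symm⟩
  set k := Nat.find hrep with hk
  obtain ⟨j, hjk, hjeq⟩ := Nat.find_spec hrep
  have hinj : ∀ a b, a < k → b < k → seq a = seq b → a = b := by
    intro a b ha hb he
    by_contra hne
    rcases lt_or_gt_of_ne hne with h | h
    · exact Nat.find_min hrep hb ⟨a, h, he⟩
    · exact Nat.find_min hrep ha ⟨b, h, he.symm⟩
  -- injectivity on (j, k]
  have hinj' : ∀ a b, j < a → a ≤ k → j < b → b ≤ k → seq a = seq b → a = b := by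
    intro a b hja hak hjb hbk he
    rcases eq_or_lt_of_le hak with rfl | hak
    · rcases eq_or_lt_of_le hbk with rfl | hbk
      · rfl
      · exact absurd (hinj j b hjk hbk (hjeq.trans he)) (Nat.ne_of_lt hjb)
    · rcases eq_or_lt_of_le hbk with rfl | hbk
      · exact absurd (hinj j a hjk hak (hjeq.trans he.symm)) (Nat.ne_of_lt hja)
      · exact hinj a b hak hbk he
  set N := k - j with hN
  have hNpos : 0 < N := Nat.sub_pos_of_lt hjk
  have hjN : j + N = k := Nat.add_sub_cancel' (le_of_lt hjk)
  set l : List Bool := (List.range N).map (fun t => tag (j + t)) with hl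
  have hlen : l.length = N := by simp [hl]
  set lam := seq j with hlam
  -- getD values
  have hgetD : ∀ t, t < N → l.getD t false = tag (j + t) := by
    intro t ht
    rw [List.getD_eq_getElem _ _ (by simpa [hlen] using ht)]
    simp [hl]
  -- partial sums
  have hsum : ∀ t : ℕ, ((List.range t).map
      (fun s => if tag (j + s) then α₂ else α₁)).sum = seq (j + t) - seq j := by
    intro t
    induction t with
    | zero => simp
    | succ t ih =>
      rw [List.range_succ, List.map_append, List.sum_append, ih]
      have h' : seq (j + (t + 1)) = seq (j + t) + (if tag (j + t) then α₂ else α₁) := by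
        rw [show j + (t + 1) = (j + t) + 1 by ring]
        exact hss (j + t)
      rw [h']
      simp
      ring
  have hwtake : ∀ t, t ≤ N → wsum α₁ α₂ (l.take t) = seq (j + t) - seq j := by
    intro t ht
    have : l.take t = (List.range t).map (fun s => tag (j + s)) := by
      rw [hl, ← List.map_take, List.take_range, Nat.min_eq_left ht]
    rw [wsum, this, List.map_map]
    exact hsum t
  -- wsum of l is zero
  have hwl : wsum α₁ α₂ l = 0 := by
    have := hwtake N le_rfl
    rw [List.take_of_length_le (by rw [hlen])] at this
    rw [this, hjN]
    have h' : seq j = seq k := hjeq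
    rw [← h']
    ring
  -- divisibility
  have hdvd : ∀ (mb : Bool) (q : Polynomial ℂ), q ≠ 0 →
      (∀ t, t < N → tag (j + t) ≠ mb → q.IsRoot (seq (j + t + 1))) →
      (Pfun α₁ α₂ mb l).comp (X - C lam) ∣ q := by
    intro mb q hq0 hroots
    have hcomp : (Pfun α₁ α₂ mb l).comp (X - C lam) =
        ∏ t ∈ Finset.range N,
          (if tag (j + t) = mb then 1
            else (X - C (seq (j + t + 1)))) := by
      rw [Pfun, hlen, comp_eq_aeval, map_prod]
      refine Finset.prod_congr rfl ?_
      intro t ht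
      rw [Finset.mem_range] at ht
      rw [hgetD t ht]
      by_cases h : tag (j + t) = mb
      · simp [h]
      · rw [if_neg h, if_neg h, ← comp_eq_aeval]
        have hw : wsum α₁ α₂ (l.take (t + 1)) = seq (j + t + 1) - seq j := by
          rw [hwtake (t + 1) ht, ← Nat.add_assoc]
        rw [hw, sub_comp, X_comp, C_comp, C_sub]
        ring
    rw [hcomp]
    set T := (Finset.range N).filter (fun t => ¬ tag (j + t) = mb) with hT
    have hprod : ∏ t ∈ Finset.range N,
        (if tag (j + t) = mb then (1 : Polynomial ℂ)
          else (X - C (seq (j + t + 1)))) =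
        ∏ t ∈ T, (X - C (seq (j + t + 1))) := by
      rw [hT, Finset.prod_filter]
      refine Finset.prod_congr rfl ?_
      intro t _
      by_cases h : tag (j + t) = mb <;> simp [h]
    rw [hprod]
    set s : Multiset ℂ := T.val.map (fun t => seq (j + t + 1)) with hs
    have hnodup : s.Nodup := by
      refine Multiset.Nodup.map_on ?_ T.nodup
      intro a ha b hb he
      simp only [hT, Finset.mem_coe, Finset.mem_val, Finset.mem_filter,
        Finset.mem_range] at ha hb
      have haN : a < N := ha.1
      have hbN : b < N := hb.1
      have := hinj' (j + a + 1) (j + b + 1) (by omega) (by omega) (by omega)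
        (by omega) he
      omega
    have hle : s ≤ q.roots := by
      rw [Multiset.le_iff_subset hnodup]
      intro a ha
      rw [hs, Multiset.mem_map] at ha
      obtain ⟨t, ht, rfl⟩ := ha
      rw [hT] at ht
      simp only [Finset.mem_val, Finset.mem_filter, Finset.mem_range] at ht
      rw [Polynomial.mem_roots hq0]
      exact hroots t ht.1 ht.2
    calc ∏ t ∈ T, (X - C (seq (j + t + 1)))
        = (s.map (fun a => X - C a)).prod := by
          rw [Finset.prod_eq_multiset_prod, hs, Multiset.map_map]
          rfl
      _ ∣ (q.roots.map (fun a => X - C a)).prod :=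
          Multiset.prod_dvd_prod_of_le (Multiset.map_le_map hle)
      _ ∣ q := prod_multiset_X_sub_C_dvd q
  refine ⟨l, lam, ?_, hwl, ?_, ?_⟩
  · intro h
    rw [h] at hlen
    simp at hlen
    omega
  · refine hdvd false q₁ h₁0 ?_
    intro t ht htag'
    have := htagroot (j + t)
    rw [Bool.ne_false_iff.mp htag'] at this
    simpa using this
  · refine hdvd true q₂ h₂0 ?_
    intro t ht htag'
    have := htagroot (j + t)
    have ht' : tag (j + t) = false := by simpa using htag'
    rw [ht'] at this
    simpa using this
end

section
/- Let α, β be non-zero complex numbers and Γ = ℤα + ℤβ. For any solution (p,q) (monic non-zero polynomials with p(u)q(u) = p(u+β)q(u+α)) and any coset c ∈ ℂ/Γ, the pair (p_c, q_c), where p_c is the monic product of factors (u-w) over all roots w of p lying in c (with multiplicity) and similarly for q_c, is again a solution: p_c(u)q_c(u) = p_c(u+β)q_c(u+α). -/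
open Polynomial

open Classical in
noncomputable def cosetPart (α β : ℂ) (c : ℂ ⧸ AddSubgroup.closure ({α, β} : Set ℂ))
    (p : Polynomial ℂ) : Polynomial ℂ :=
  ((p.roots.filter
      (fun z => (QuotientAddGroup.mk z : ℂ ⧸ AddSubgroup.closure ({α, β} : Set ℂ)) = c)).map
    (fun z => X - C z)).prod

/-!
Taking the coset part `p ↦ p_c` is multiplicative, as the roots of a product are the union of
the roots, and commutes with each shift `u ↦ u + γ` with `γ ∈ Γ`, as that shift moves every root
by `-γ`, within its coset of `Γ`. Apply it to both sides of `p q = p(· + β) q(· + α)`.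
-/

namespace Polynomial

variable {R : Type*} [CommRing R] [IsDomain R]

theorem roots_comp_X_add_C (p : R[X]) (γ : R) :
    (p.comp (X + C γ)).roots = p.roots.map (· - γ) := by
  simpa [sub_eq_add_neg] using roots_comp_C_mul_X_add_C p 1 γ isUnit_one

omit [IsDomain R] in
theorem multiset_prod_X_sub_C_comp_X_add_C (s : Multiset R) (γ : R) :
    (s.map fun z => X - C z).prod.comp (X + C γ) =
      ((s.map (· - γ)).map fun z => X - C z).prod := by
  rw [multiset_prod_comp, Multiset.map_map, Multiset.map_map]
  congr 1
  refine Multiset.map_congr rfl fun z _ => ?_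
  simp only [Function.comp_apply, sub_comp, X_comp, C_comp, C_sub]
  ring

section Coset

variable (H : AddSubgroup R) (c : R ⧸ H)

open Classical in
noncomputable def cosetFactor (p : R[X]) : R[X] :=
  ((p.roots.filter fun z => (QuotientAddGroup.mk z : R ⧸ H) = c).map fun z => X - C z).prod

theorem cosetFactor_mul {p q : R[X]} (hp : p ≠ 0) (hq : q ≠ 0) :
    cosetFactor H c (p * q) = cosetFactor H c p * cosetFactor H c q := by
  simp only [cosetFactor, roots_mul (mul_ne_zero hp hq), Multiset.filter_add, Multiset.map_add,
    Multiset.prod_add]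

theorem cosetFactor_comp_X_add_C (p : R[X]) {γ : R} (hγ : γ ∈ H) :
    cosetFactor H c (p.comp (X + C γ)) = (cosetFactor H c p).comp (X + C γ) := by
  have hshift (z : R) : (QuotientAddGroup.mk (z - γ) : R ⧸ H) = QuotientAddGroup.mk z :=
    QuotientAddGroup.eq_iff_sub_mem.mpr (by simpa using H.neg_mem hγ)
  simp only [cosetFactor, multiset_prod_X_sub_C_comp_X_add_C, roots_comp_X_add_C,
    Multiset.filter_map, Function.comp_def]
  classical
  congr 3
  exact Multiset.filter_congr fun z _ => by rw [hshift]

end Coset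

end Polynomial

theorem cosetPart_eq_cosetFactor (α β : ℂ) (c : ℂ ⧸ AddSubgroup.closure ({α, β} : Set ℂ)) :
    cosetPart α β c = cosetFactor (AddSubgroup.closure {α, β}) c :=
  rfl

theorem stmt18_general (α β : ℂ)
    (p q : Polynomial ℂ) (hp0 : p ≠ 0) (hq0 : q ≠ 0)
    (heq : p * q = p.comp (X + C β) * q.comp (X + C α))
    (c : ℂ ⧸ AddSubgroup.closure ({α, β} : Set ℂ)) :
    cosetPart α β c p * cosetPart α β c q =
      (cosetPart α β c p).comp (X + C β) * (cosetPart α β c q).comp (X + C α) := by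
  have hα : α ∈ AddSubgroup.closure ({α, β} : Set ℂ) := AddSubgroup.subset_closure (by simp)
  have hβ : β ∈ AddSubgroup.closure ({α, β} : Set ℂ) := AddSubgroup.subset_closure (by simp)
  rw [cosetPart_eq_cosetFactor, ← cosetFactor_mul _ _ hp0 hq0, heq,
    cosetFactor_mul _ _ (comp_X_add_C_ne_zero_iff.mpr hp0) (comp_X_add_C_ne_zero_iff.mpr hq0),
    cosetFactor_comp_X_add_C _ _ _ hβ, cosetFactor_comp_X_add_C _ _ _ hα]

theorem stmt18 (α β : ℂ) (hα : α ≠ 0) (hβ : β ≠ 0)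
    (p q : Polynomial ℂ) (hp0 : p ≠ 0) (hq0 : q ≠ 0)
    (hp : p.Monic) (hq : q.Monic)
    (heq : p * q = p.comp (X + C β) * q.comp (X + C α))
    (c : ℂ ⧸ AddSubgroup.closure ({α, β} : Set ℂ)) :
    cosetPart α β c p * cosetPart α β c q =
      (cosetPart α β c p).comp (X + C β) * (cosetPart α β c q).comp (X + C α) :=
  stmt18_general α β p q hp0 hq0 heq c
end

section
/- Let α₁ and α₂ be non-zero integers of opposite sign and set N = |α₁| + |α₂|. Then there exists a unique sequence (i₁,…,i_N) with entries in {1,2} such that α_{i₁} + α_{i₂} + ⋯ + α_{i_N} = 0 and every partial sum α_{i₁} + ⋯ + α_{i_k} lies in the interval {0, 1, …, N-1} for all k ∈ {1,…,N}. -/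
def s19greedy (α₁ α₂ : ℤ) (N : ℕ) : ℕ → ℤ → List Bool
  | 0, _ => []
  | n+1, s =>
      if 0 ≤ s + α₁ ∧ s + α₁ < (N : ℤ) then false :: s19greedy α₁ α₂ N n (s + α₁)
      else true :: s19greedy α₁ α₂ N n (s + α₂)

lemma s19len (α₁ α₂ : ℤ) (N : ℕ) : ∀ n (s : ℤ), (s19greedy α₁ α₂ N n s).length = n := by
  intro n
  induction n with
  | zero => intro s; simp [s19greedy]
  | succ n ih =>
      intro s
      simp only [s19greedy]
      split <;> simp [ih]

lemma s19inv (α₁ α₂ : ℤ) (N : ℕ)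
    (H : (0 < α₁ ∧ α₂ < 0 ∧ (N : ℤ) = α₁ - α₂) ∨ (α₁ < 0 ∧ 0 < α₂ ∧ (N : ℤ) = α₂ - α₁)) :
    ∀ n (s : ℤ), 0 ≤ s → s < (N : ℤ) → ∀ k, k ≤ n →
      0 ≤ s + (((s19greedy α₁ α₂ N n s).take k).map (fun b => if b then α₂ else α₁)).sum ∧
      s + (((s19greedy α₁ α₂ N n s).take k).map (fun b => if b then α₂ else α₁)).sum < (N : ℤ) := by
  intro n
  induction n with
  | zero =>
      intro s h0 h1 k hk
      have : k = 0 := by omega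
      subst this
      simp [s19greedy, h0, h1]
  | succ n ih =>
      intro s h0 h1 k hk
      simp only [s19greedy]
      by_cases h : 0 ≤ s + α₁ ∧ s + α₁ < (N : ℤ)
      · rw [if_pos h]
        cases k with
        | zero => simp [h0, h1]
        | succ j =>
            have hj : j ≤ n := by omega
            have := ih (s + α₁) h.1 h.2 j hj
            simp only [List.take_succ_cons, List.map_cons, List.sum_cons, Bool.false_eq_true, if_false]
            constructor <;> linarith [this.1, this.2]
      · rw [if_neg h]
        have h2 : 0 ≤ s + α₂ ∧ s + α₂ < (N : ℤ) := by
          rcases not_and_or.mp h with h' | h' <;> push_neg at h' <;>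
            rcases H with ⟨ha, hb, he⟩ | ⟨ha, hb, he⟩ <;> constructor <;> omega
        cases k with
        | zero => simp [h0, h1]
        | succ j =>
            have hj : j ≤ n := by omega
            have := ih (s + α₂) h2.1 h2.2 j hj
            simp only [List.take_succ_cons, List.map_cons, List.sum_cons, eq_self_iff_true, if_true]
            constructor <;> linarith [this.1, this.2]

lemma s19uniq (α₁ α₂ : ℤ) (N : ℕ)
    (H : (0 < α₁ ∧ α₂ < 0 ∧ (N : ℤ) = α₁ - α₂) ∨ (α₁ < 0 ∧ 0 < α₂ ∧ (N : ℤ) = α₂ - α₁)) :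
    ∀ n (s : ℤ), 0 ≤ s → s < (N : ℤ) → ∀ l : List Bool, l.length = n →
      (∀ k, 1 ≤ k → k ≤ n →
        0 ≤ s + ((l.take k).map (fun b => if b then α₂ else α₁)).sum ∧
        s + ((l.take k).map (fun b => if b then α₂ else α₁)).sum < (N : ℤ)) →
      l = s19greedy α₁ α₂ N n s := by
  intro n
  induction n with
  | zero =>
      intro s h0 h1 l hlen _
      simp [s19greedy]
      exact List.length_eq_zero_iff.mp hlen
  | succ n ih =>
      intro s h0 h1 l hlen hpart
      cases l with
      | nil => simp at hlen
      | cons b t =>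
          have hlt : t.length = n := by simpa using hlen
          have h1' := hpart 1 le_rfl (by omega)
          simp only [List.take_succ_cons, List.take_zero, List.map_cons, List.map_nil,
            List.sum_cons, List.sum_nil, add_zero] at h1'
          simp only [s19greedy]
          by_cases h : 0 ≤ s + α₁ ∧ s + α₁ < (N : ℤ)
          · rw [if_pos h]
            have hb : b = false := by
              cases b
              · rfl
              · exfalso
                simp only [eq_self_iff_true, if_true] at h1'
                rcases H with ⟨ha, hb', he⟩ | ⟨ha, hb', he⟩ <;> omega
            subst hb
            congr 1
            apply ih (s + α₁) h.1 h.2 t hlt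
            intro k hk1 hkn
            have := hpart (k + 1) (by omega) (by omega)
            simp only [List.take_succ_cons, List.map_cons, List.sum_cons,
              Bool.false_eq_true, if_false] at this
            constructor <;> linarith [this.1, this.2]
          · rw [if_neg h]
            have h2 : 0 ≤ s + α₂ ∧ s + α₂ < (N : ℤ) := by
              rcases not_and_or.mp h with h' | h' <;> push_neg at h' <;>
                rcases H with ⟨ha, hb', he⟩ | ⟨ha, hb', he⟩ <;> constructor <;> omega
            have hb : b = true := by
              cases b
              · exfalso
                simp only [Bool.false_eq_true, if_false] at h1'
                exact h ⟨h1'.1, h1'.2⟩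
              · rfl
            subst hb
            congr 1
            apply ih (s + α₂) h2.1 h2.2 t hlt
            intro k hk1 hkn
            have := hpart (k + 1) (by omega) (by omega)
            simp only [List.take_succ_cons, List.map_cons, List.sum_cons,
              eq_self_iff_true, if_true] at this
            constructor <;> linarith [this.1, this.2]

lemma s19dvd (α₁ α₂ : ℤ) (N : ℕ)
    (H : (0 < α₁ ∧ α₂ < 0 ∧ (N : ℤ) = α₁ - α₂) ∨ (α₁ < 0 ∧ 0 < α₂ ∧ (N : ℤ) = α₂ - α₁)) :
    ∀ l : List Bool, (N : ℤ) ∣ ((l.map (fun b => if b then α₂ else α₁)).sum - l.length * α₁) := by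
  intro l
  induction l with
  | nil => simp
  | cons b t ih =>
      have key : (N : ℤ) ∣ ((if b then α₂ else α₁) - α₁) := by
        cases b
        · simp
        · simp only [eq_self_iff_true, if_true]
          rcases H with ⟨ha, hb, he⟩ | ⟨ha, hb, he⟩
          · exact ⟨-1, by omega⟩
          · exact ⟨1, by omega⟩
      have heq : ((b :: t).map (fun b => if b then α₂ else α₁)).sum - ((b :: t).length : ℤ) * α₁ =
          ((if b then α₂ else α₁) - α₁) + ((t.map (fun b => if b then α₂ else α₁)).sum - (t.length : ℤ) * α₁) := by
        simp only [List.map_cons, List.sum_cons, List.length_cons]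
        push_cast
        ring
      rw [heq]
      exact dvd_add key ih

theorem stmt19 (α₁ α₂ : ℤ) (h₁ : α₁ ≠ 0) (h₂ : α₂ ≠ 0) (hsign : α₁ * α₂ < 0)
    (N : ℕ) (hN : N = α₁.natAbs + α₂.natAbs) :
    ∃! l : List Bool,
      l.length = N ∧
      (l.map (fun b => if b then α₂ else α₁)).sum = 0 ∧
      ∀ k : ℕ, 1 ≤ k → k ≤ N →
        0 ≤ ((l.take k).map (fun b => if b then α₂ else α₁)).sum ∧
        ((l.take k).map (fun b => if b then α₂ else α₁)).sum < (N : ℤ) := by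
  have hα : (0 < α₁ ∧ α₂ < 0) ∨ (α₁ < 0 ∧ 0 < α₂) := by
    rcases lt_or_gt_of_ne h₁ with h | h
    · right
      refine ⟨h, ?_⟩
      by_contra hc
      push_neg at hc
      have : α₂ < 0 := lt_of_le_of_ne hc h₂
      nlinarith
    · left
      refine ⟨h, ?_⟩
      by_contra hc
      push_neg at hc
      have : 0 < α₂ := lt_of_le_of_ne hc (Ne.symm h₂)
      nlinarith
  have H : (0 < α₁ ∧ α₂ < 0 ∧ (N : ℤ) = α₁ - α₂) ∨ (α₁ < 0 ∧ 0 < α₂ ∧ (N : ℤ) = α₂ - α₁) := by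
    rcases hα with ⟨ha, hb⟩ | ⟨ha, hb⟩
    · left; refine ⟨ha, hb, ?_⟩; omega
    · right; refine ⟨ha, hb, ?_⟩; omega
  have hN2 : 2 ≤ N := by omega
  have hN0 : (0 : ℤ) < (N : ℤ) := by exact_mod_cast (by omega : 0 < N)
  set L := s19greedy α₁ α₂ N N 0 with hL
  have hlen : L.length = N := s19len α₁ α₂ N N 0
  have hinv := s19inv α₁ α₂ N H N 0 le_rfl hN0
  have htake : L.take N = L := by rw [← hlen, List.take_length]
  have hpart : ∀ k : ℕ, 1 ≤ k → k ≤ N →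
      0 ≤ ((L.take k).map (fun b => if b then α₂ else α₁)).sum ∧
      ((L.take k).map (fun b => if b then α₂ else α₁)).sum < (N : ℤ) := by
    intro k _ hkN
    have := hinv k hkN
    constructor <;> linarith [this.1, this.2]
  have hsum : (L.map (fun b => if b then α₂ else α₁)).sum = 0 := by
    have hb := hpart N (by omega) le_rfl
    rw [htake] at hb
    have hd := s19dvd α₁ α₂ N H L
    rw [hlen] at hd
    have hd2 : (N : ℤ) ∣ (L.map (fun b => if b then α₂ else α₁)).sum := by
      have := dvd_add hd (dvd_mul_right (N : ℤ) α₁)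
      simpa using this
    obtain ⟨c, hc⟩ := hd2
    rcases lt_trichotomy c 0 with h | h | h
    · exfalso
      have : (N : ℤ) * c < 0 := mul_neg_of_pos_of_neg hN0 h
      linarith [hb.1, hc ▸ this]
    · rw [hc, h, mul_zero]
    · exfalso
      have : (N : ℤ) ≤ (N : ℤ) * c := le_mul_of_one_le_right hN0.le (by omega)
      linarith [hb.2, hc ▸ this]
  refine ⟨L, ⟨hlen, hsum, hpart⟩, ?_⟩
  intro l ⟨hl1, _, hl3⟩
  apply s19uniq α₁ α₂ N H N 0 le_rfl hN0 l hl1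
  intro k hk1 hkN
  have := hl3 k hk1 hkN
  constructor <;> linarith [this.1, this.2]
end
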